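/- arXiv:2007.09434 — 2 statements merged into one kernel-verified Lean document; each statement's English description precedes it below -/
import Mathlib

section
/- In the stages construction, the map s : (φ̄ × ψ̄)⁻¹(0) → ψ⁻¹(0) defined by s(p, p̄, y) = (p q̄, y) (where p ∈ T*_q G, p̄ ∈ T*_{q̄} K) is well-defined (takes values in ψ⁻¹(0)), surjective with right inverse (p,y) ↦ (p, (q⁻¹p)|_K, y), and equivariant with respect to the G × K × H-action on its domain and G × H-action on its target. -/
open Manifold Topology

noncomputable section

variable {E : Type*} [NormedAddCommGroup E] [NormedSpace ℝ E]
variable {EK : Type*} [NormedAddCommGroup EK] [NormedSpace ℝ EK]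
variable {F : Type*} [NormedAddCommGroup F] [NormedSpace ℝ F]
variable {G : Type*} [TopologicalSpace G] [ChartedSpace E G] [Group G] [LieGroup 𝓘(ℝ, E) (⊤ : ℕ∞) G]
variable {K : Type*} [TopologicalSpace K] [ChartedSpace EK K] [Group K] [LieGroup 𝓘(ℝ, EK) (⊤ : ℕ∞) K]
variable {H : Type*} [TopologicalSpace H] [ChartedSpace F H] [Group H] [LieGroup 𝓘(ℝ, F) (⊤ : ℕ∞) H]

/-- The adjoint representation, as the derivative of conjugation at the identity. -/
def Ad {E' : Type*} [NormedAddCommGroup E'] [NormedSpace ℝ E']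
    {G' : Type*} [TopologicalSpace G'] [ChartedSpace E' G'] [Group G']
    [LieGroup 𝓘(ℝ, E') (⊤ : ℕ∞) G'] (g : G') : E' →L[ℝ] E' :=
  mfderiv 𝓘(ℝ, E') 𝓘(ℝ, E') (fun x => g * x * g⁻¹) (1 : G')

/-- The derivative at the identity of a (smooth) homomorphism of Lie groups, e.g.
the inclusion of Lie algebras induced by the inclusion of a closed subgroup. -/
def dHom {E' F' : Type*} [NormedAddCommGroup E'] [NormedSpace ℝ E']
    [NormedAddCommGroup F'] [NormedSpace ℝ F']
    {G' H' : Type*} [TopologicalSpace G'] [ChartedSpace E' G'] [Group G']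
    [LieGroup 𝓘(ℝ, E') (⊤ : ℕ∞) G'] [TopologicalSpace H'] [ChartedSpace F' H'] [Group H']
    [LieGroup 𝓘(ℝ, F') (⊤ : ℕ∞) H'] (ι : H' →* G') : F' →L[ℝ] E' :=
  mfderiv 𝓘(ℝ, F') 𝓘(ℝ, E') (ι : H' → G') (1 : H')

variable {Y : Type*} [MulAction H Y]
variable (ιKG : K →* G) (ιHK : H →* K)

/-- `M = T*G × T*K × Y`, with both cotangent bundles left-trivialized. -/
abbrev Mspace (E EK : Type*) [NormedAddCommGroup E] [NormedSpace ℝ E]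
    [NormedAddCommGroup EK] [NormedSpace ℝ EK] (G K Y : Type*) :=
  (G × (E →L[ℝ] ℝ)) × (K × (EK →L[ℝ] ℝ)) × Y

/-- `φ̄(p, p̄, y) = p̄ q̄⁻¹ − (q⁻¹ p)|_𝔨`, in left trivialization. -/
def phiBar (m : Mspace E EK G K Y) : EK →L[ℝ] ℝ :=
  m.2.1.2.comp (Ad m.2.1.1⁻¹) - m.1.2.comp (dHom ιKG)

/-- `ψ̄(p, p̄, y) = Ψ(y) − (q̄⁻¹ p̄)|_𝔥`, in left trivialization. -/
def psiBar (Ψ : Y → F →L[ℝ] ℝ) (m : Mspace E EK G K Y) : F →L[ℝ] ℝ :=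
  Ψ m.2.2 - m.2.1.2.comp (dHom ιHK)

/-- `ψ(p, y) = Ψ(y) − (q⁻¹ p)|_𝔥` on `N = T*G × Y`, in left trivialization. -/
def psiN (Ψ : Y → F →L[ℝ] ℝ) (n : (G × (E →L[ℝ] ℝ)) × Y) : F →L[ℝ] ℝ :=
  Ψ n.2 - n.1.2.comp (dHom (ιKG.comp ιHK))

/-- The map `s(p, p̄, y) = (p q̄, y)`: the covector `p q̄ ∈ T*_{q ι(q̄)} G` has left
trivialization `μ ∘ Ad(ι(q̄))`. -/
def sMap (m : Mspace E EK G K Y) : (G × (E →L[ℝ] ℝ)) × Y :=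
  ((m.1.1 * ιKG m.2.1.1, m.1.2.comp (Ad (ιKG m.2.1.1))), m.2.2)

/-- The `G × K × H`-action `(g,k,h)(p, p̄, y) = (g p k⁻¹, k p̄ h⁻¹, h(y))` on `M`. -/
def actGKH (g : G) (k : K) (h : H) (m : Mspace E EK G K Y) : Mspace E EK G K Y :=
  ((g * m.1.1 * (ιKG k)⁻¹, m.1.2.comp (Ad ((ιKG k)⁻¹))),
   (k * m.2.1.1 * (ιHK h)⁻¹, m.2.1.2.comp (Ad ((ιHK h)⁻¹))),
   h • m.2.2)

/-- The `G × H`-action `(g,h)(p, y) = (g p h⁻¹, h(y))` on `N = T*G × Y`. -/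
def actGH (g : G) (h : H) (n : (G × (E →L[ℝ] ℝ)) × Y) : (G × (E →L[ℝ] ℝ)) × Y :=
  ((g * n.1.1 * (ιKG (ιHK h))⁻¹, n.1.2.comp (Ad ((ιKG (ιHK h))⁻¹))), h • n.2)

/-!
Everything rests on two consequences of the chain rule at the identity: `Ad` is multiplicative,
and the differential of a homomorphism `ι : K → G` intertwines the adjoint actions,
`Ad (ι k) ∘ dι = dι ∘ Ad k` (differentiate `ι ∘ conj k = conj (ι k) ∘ ι`). In left
trivialization `φ̄ = 0` reads `p̄ = p ∘ dι ∘ Ad q̄`, so the left trivialization `p ∘ Ad (ι q̄)` of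
`p q̄`, restricted to `𝔥`, equals `p̄ ∘ dι_𝔥 = Ψ y`. Equivariance is `Ad` being multiplicative.
-/

section Differentials

variable {E₁ E₂ E₃ : Type*} [NormedAddCommGroup E₁] [NormedSpace ℝ E₁] [NormedAddCommGroup E₂]
  [NormedSpace ℝ E₂] [NormedAddCommGroup E₃] [NormedSpace ℝ E₃]
  {M₁ M₂ M₃ : Type*} [TopologicalSpace M₁] [ChartedSpace E₁ M₁] [TopologicalSpace M₂]
  [ChartedSpace E₂ M₂] [TopologicalSpace M₃] [ChartedSpace E₃ M₃]

theorem mfderiv_comp_of_map_eq {f : M₁ → M₂} {g : M₂ → M₃} {x : M₁} {y : M₂}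
    (hg : MDifferentiableAt 𝓘(ℝ, E₂) 𝓘(ℝ, E₃) g y) (hf : MDifferentiableAt 𝓘(ℝ, E₁) 𝓘(ℝ, E₂) f x)
    (hy : f x = y) :
    mfderiv 𝓘(ℝ, E₁) 𝓘(ℝ, E₃) (g ∘ f) x =
      (mfderiv 𝓘(ℝ, E₂) 𝓘(ℝ, E₃) g y).comp (mfderiv 𝓘(ℝ, E₁) 𝓘(ℝ, E₂) f x) := by
  subst hy
  exact mfderiv_comp x hg hf

end Differentials

theorem mdifferentiable_conj (g : G) :
    MDifferentiable 𝓘(ℝ, E) 𝓘(ℝ, E) (fun x => g * x * g⁻¹) :=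
  ((contMDiff_const.mul contMDiff_id).mul contMDiff_const :
    ContMDiff 𝓘(ℝ, E) 𝓘(ℝ, E) (⊤ : ℕ∞) _).mdifferentiable (by simp)

theorem Ad_one : Ad (1 : G) = ContinuousLinearMap.id ℝ E := by
  have : (fun x : G => 1 * x * 1⁻¹) = id := by
    funext x
    simp
  rw [Ad, this, mfderiv_id]
  rfl

theorem Ad_mul (a b : G) : Ad (a * b) = (Ad a : E →L[ℝ] E).comp (Ad b) := by
  have : (fun x : G => a * b * x * (a * b)⁻¹) =
      (fun x => a * x * a⁻¹) ∘ (fun x => b * x * b⁻¹) := by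
    funext x
    simp [mul_assoc]
  rw [Ad, this,
    mfderiv_comp_of_map_eq (mdifferentiable_conj a 1) (mdifferentiable_conj b 1) (by simp)]
  rfl

theorem Ad_inv_comp_Ad (g : G) :
    (Ad g⁻¹ : E →L[ℝ] E).comp (Ad g) = ContinuousLinearMap.id ℝ E := by
  rw [← Ad_mul, inv_mul_cancel, Ad_one]

theorem Ad_comp_dHom (ι : K →* G) (hι : MDifferentiableAt 𝓘(ℝ, EK) 𝓘(ℝ, E) ι 1) (k : K) :
    (Ad (ι k) : E →L[ℝ] E).comp (dHom ι) = (dHom ι : EK →L[ℝ] E).comp (Ad k) := by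
  have hconj : (fun x => ι k * x * (ι k)⁻¹) ∘ ι = ι ∘ (fun x => k * x * k⁻¹) := by
    funext x
    simp
  have hleft := mfderiv_comp_of_map_eq (mdifferentiable_conj (ι k) 1) hι (map_one ι)
  have hright := mfderiv_comp_of_map_eq (x := 1) hι (mdifferentiable_conj k 1) (by simp)
  rw [hconj, hright] at hleft
  exact hleft.symm

theorem dHom_comp (ι₁ : K →* G) (ι₂ : H →* K) (h₁ : MDifferentiableAt 𝓘(ℝ, EK) 𝓘(ℝ, E) ι₁ 1)
    (h₂ : MDifferentiableAt 𝓘(ℝ, F) 𝓘(ℝ, EK) ι₂ 1) :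
    dHom (ι₁.comp ι₂) = (dHom ι₁ : EK →L[ℝ] E).comp (dHom ι₂ : F →L[ℝ] EK) :=
  mfderiv_comp_of_map_eq h₁ h₂ (map_one ι₂)

omit [MulAction H Y] in
theorem psiN_sMap_eq_zero (hKG : MDifferentiableAt 𝓘(ℝ, EK) 𝓘(ℝ, E) ιKG 1)
    (hHK : MDifferentiableAt 𝓘(ℝ, F) 𝓘(ℝ, EK) ιHK 1) {Ψ : Y → F →L[ℝ] ℝ}
    {m : Mspace E EK G K Y} (hφ : phiBar ιKG m = 0) (hψ : psiBar ιHK Ψ m = 0) :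
    psiN ιKG ιHK Ψ (sMap ιKG m) = 0 := by
  obtain ⟨⟨q, p⟩, ⟨r, pr⟩, y⟩ := m
  rw [phiBar, sub_eq_zero] at hφ
  rw [psiBar, sub_eq_zero] at hψ
  have hpr : pr = (p.comp (dHom ιKG)).comp (Ad r) := by
    rw [← hφ, ContinuousLinearMap.comp_assoc, Ad_inv_comp_Ad, ContinuousLinearMap.comp_id]
  rw [psiN, sub_eq_zero, sMap, hψ, hpr, dHom_comp ιKG ιHK hKG hHK]
  calc ((p.comp (dHom ιKG)).comp (Ad r)).comp (dHom ιHK)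
      _ = (p.comp ((dHom ιKG).comp (Ad r))).comp (dHom ιHK) := rfl
      _ = (p.comp ((Ad (ιKG r)).comp (dHom ιKG))).comp (dHom ιHK) := by rw [Ad_comp_dHom ιKG hKG]
      _ = (p.comp (Ad (ιKG r))).comp ((dHom ιKG).comp (dHom ιHK)) := rfl

def sRightInv (n : (G × (E →L[ℝ] ℝ)) × Y) : Mspace E EK G K Y :=
  ((n.1.1, n.1.2), ((1 : K), n.1.2.comp (dHom ιKG : EK →L[ℝ] E)), n.2)

theorem phiBar_sRightInv_eq_zero (n : (G × (E →L[ℝ] ℝ)) × Y) :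
    phiBar ιKG (sRightInv ιKG n : Mspace E EK G K Y) = 0 := by
  simp [phiBar, sRightInv, Ad_one]

omit [MulAction H Y] in
theorem psiBar_sRightInv_eq_zero (hKG : MDifferentiableAt 𝓘(ℝ, EK) 𝓘(ℝ, E) ιKG 1)
    (hHK : MDifferentiableAt 𝓘(ℝ, F) 𝓘(ℝ, EK) ιHK 1) {Ψ : Y → F →L[ℝ] ℝ}
    {n : (G × (E →L[ℝ] ℝ)) × Y} (hn : psiN ιKG ιHK Ψ n = 0) :
    psiBar ιHK Ψ (sRightInv ιKG n : Mspace E EK G K Y) = 0 := by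
  rwa [psiBar, sRightInv, ContinuousLinearMap.comp_assoc, ← dHom_comp ιKG ιHK hKG hHK]

theorem sMap_sRightInv (n : (G × (E →L[ℝ] ℝ)) × Y) :
    sMap ιKG (sRightInv ιKG n : Mspace E EK G K Y) = n := by
  simp [sMap, sRightInv, Ad_one]

omit [TopologicalSpace H] in
theorem sMap_actGKH (g : G) (k : K) (h : H) (m : Mspace E EK G K Y) :
    sMap ιKG (actGKH ιKG ιHK g k h m) = actGH ιKG ιHK g h (sMap ιKG m) := by
  have hAd : (Ad (ιKG k)⁻¹ : E →L[ℝ] E).comp (Ad (ιKG (k * m.2.1.1 * (ιHK h)⁻¹))) =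
      (Ad (ιKG m.2.1.1)).comp (Ad (ιKG (ιHK h))⁻¹) := by
    rw [← Ad_mul, ← Ad_mul]
    simp [mul_assoc]
  refine Prod.ext (Prod.ext ?_ ?_) rfl
  · simp [sMap, actGKH, actGH, mul_assoc]
  · simp only [sMap, actGKH, actGH, ContinuousLinearMap.comp_assoc, hAd]

theorem sMap_wellDefined_surjective_equivariant
    (hιKG : ContMDiff 𝓘(ℝ, EK) 𝓘(ℝ, E) (⊤ : ℕ∞) (ιKG : K → G))
    (hιHK : ContMDiff 𝓘(ℝ, F) 𝓘(ℝ, EK) (⊤ : ℕ∞) (ιHK : H → K))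
    (Ψ : Y → F →L[ℝ] ℝ) :
    -- well-defined: s takes the zero level of φ̄ × ψ̄ into the zero level of ψ
    (∀ m : Mspace E EK G K Y, phiBar ιKG m = 0 → psiBar ιHK Ψ m = 0 →
      psiN ιKG ιHK Ψ (sMap ιKG m) = 0) ∧
    -- surjectivity, with the indicated right inverse
    (∀ n : (G × (E →L[ℝ] ℝ)) × Y, psiN ιKG ιHK Ψ n = 0 →
      phiBar ιKG (((n.1.1, n.1.2), ((1 : K), n.1.2.comp (dHom ιKG)), n.2)
        : Mspace E EK G K Y) = 0 ∧
      psiBar ιHK Ψ (((n.1.1, n.1.2), ((1 : K), n.1.2.comp (dHom ιKG)), n.2)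
        : Mspace E EK G K Y) = 0 ∧
      sMap ιKG (((n.1.1, n.1.2), ((1 : K), n.1.2.comp (dHom ιKG)), n.2)
        : Mspace E EK G K Y) = n) ∧
    -- equivariance
    (∀ (g : G) (k : K) (h : H) (m : Mspace E EK G K Y),
      sMap ιKG (actGKH ιKG ιHK g k h m) = actGH ιKG ιHK g h (sMap ιKG m)) := by
  have hKG : MDifferentiableAt 𝓘(ℝ, EK) 𝓘(ℝ, E) ιKG 1 := hιKG.mdifferentiableAt (by simp)
  have hHK : MDifferentiableAt 𝓘(ℝ, F) 𝓘(ℝ, EK) ιHK 1 := hιHK.mdifferentiableAt (by simp)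
  exact ⟨fun _ => psiN_sMap_eq_zero ιKG ιHK hKG hHK,
    fun n hn => ⟨phiBar_sRightInv_eq_zero ιKG n, psiBar_sRightInv_eq_zero ιKG ιHK hKG hHK hn,
      sMap_sRightInv ιKG n⟩,
    sMap_actGKH ιKG ιHK⟩
end
end

section
/- Define the G'-action on X̃' = ℝ² × 𝕋 (coordinates (p,s,z)) by g'·(p,s,z) = (p + e + Re(conj(ib)·e^{i(s+a)}), s + a, z·e^{i[Re(b̄·e^{i(s+a)}) − se − f]}), where g' ∈ G' has parameters a,e,f ∈ ℝ, b ∈ ℂ. This is a group action, and it preserves the contact 1-form ϖ = p·ds + dz/(iz). -/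
open Complex

noncomputable section

/-- Elements of the solvable group `G'`, parametrized by `(a, b, e, f)` with
`a, e, f ∈ ℝ`, `b ∈ ℂ`, as in equation (12). -/
structure Gp where
  a : ℝ
  b : ℂ
  e : ℝ
  f : ℝ

/-- The multiplication of `G'`, induced from multiplication of the matrices of
equation (12). -/
def Gp.mul (g₁ g₂ : Gp) : Gp :=
  ⟨g₁.a + g₂.a, g₁.b + Complex.exp (Complex.I * g₁.a) * g₂.b,
   g₁.e + g₂.e, g₁.f + g₂.f + g₁.e * g₂.a⟩

/-- The identity element of `G'`. -/
def Gp.one : Gp := ⟨0, 0, 0, 0⟩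

/-- The `G'`-action on `X̃' = ℝ² × 𝕋` (coordinates `(p, s, z)`, the third
coordinate lying on the unit circle of `ℂ`):
`g'·(p,s,z) = (p + e + Re(conj(ib)·e^{i(s+a)}), s + a, z·e^{i[Re(b̄·e^{i(s+a)}) − se − f]})`. -/
def Gact (g : Gp) (x : ℝ × ℝ × ℂ) : ℝ × ℝ × ℂ :=
  (x.1 + g.e + ((starRingEnd ℂ) (Complex.I * g.b) * Complex.exp (Complex.I * (x.2.1 + g.a))).re,
   x.2.1 + g.a,
   x.2.2 * Complex.exp (Complex.I *
     ((((starRingEnd ℂ) g.b) * Complex.exp (Complex.I * (x.2.1 + g.a))).re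
       - x.2.1 * g.e - g.f)))

/-- `X̃' = ℝ² × 𝕋` as a subset of `ℝ × ℝ × ℂ`. -/
def Xtilde : Set (ℝ × ℝ × ℂ) := {x | ‖x.2.2‖ = 1}

/-- The contact `1`-form `ϖ = p·ds + dz/(iz)`, evaluated at the point `x` on a
tangent vector `v = (vp, vs, vz)` (with `vz` tangent to the circle at `z = x.2.2`):
`ϖ_x(v) = p·vs + Re(vz/(i z))`. -/
def varpi (x v : ℝ × ℝ × ℂ) : ℝ :=
  x.1 * v.2.1 + (v.2.2 / (Complex.I * x.2.2)).re

/-!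
Put `w_g(s) = b̄ e^{i(s+a)}`. Then `Gact g` is the skew shift
`(p, s, z) ↦ (p + h(s), s + a, z e^{iψ(s)})` with `h = e + Im w_g` and `ψ = Re w_g - s e - f`.
Any such map pulls `ϖ` back to `ϖ + (h + ψ') ds`, and `w_g' = i w_g` gives
`ψ' = -Im w_g - e = -h`. The action property reduces to the cocycle identity
`w_{g₁g₂}(s) = w_{g₁}(s + a₂) + w_{g₂}(s)`.
-/

def skewShift (a : ℝ) (h ψ : ℝ → ℝ) (x : ℝ × ℝ × ℂ) : ℝ × ℝ × ℂ :=
  (x.1 + h x.2.1, x.2.1 + a, x.2.2 * exp (ψ x.2.1 * I))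

theorem skewShift_mapsTo_Xtilde (a : ℝ) (h ψ : ℝ → ℝ) :
    Set.MapsTo (skewShift a h ψ) Xtilde Xtilde := by
  intro x hx
  simpa [Xtilde, skewShift, norm_exp_ofReal_mul_I] using hx

theorem ne_zero_of_mem_Xtilde {x : ℝ × ℝ × ℂ} (hx : x ∈ Xtilde) : x.2.2 ≠ 0 :=
  norm_ne_zero_iff.mp (hx.symm ▸ one_ne_zero)

section SkewShift

variable {a : ℝ} {h ψ : ℝ → ℝ} {h' ψ' p s : ℝ} {z : ℂ}

theorem fderiv_skewShift_apply (hh : HasDerivAt h h' s) (hψ : HasDerivAt ψ ψ' s)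
    (v : ℝ × ℝ × ℂ) :
    fderiv ℝ (skewShift a h ψ) (p, s, z) v =
      (v.1 + v.2.1 * h', v.2.1,
        z * (v.2.1 * (exp (ψ s * I) * (ψ' * I))) + exp (ψ s * I) * v.2.2) := by
  have hs := (hasFDerivAt_id (𝕜 := ℝ) ((p, s, z) : ℝ × ℝ × ℂ)).snd.fst
  have hz := (hasFDerivAt_id (𝕜 := ℝ) ((p, s, z) : ℝ × ℝ × ℂ)).snd.snd
  have hrot : HasDerivAt (fun t => exp (ψ t * I)) (exp (ψ s * I) * (ψ' * I)) s :=
    (hψ.ofReal_comp.mul_const I).cexp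
  have hF := (hasFDerivAt_fst.add (hh.hasFDerivAt.comp _ hs)).prodMk
    ((hs.add_const a).prodMk (hz.mul (hrot.hasFDerivAt.comp _ hs)))
  rw [HasFDerivAt.fderiv (f := skewShift a h ψ) hF]
  simp

theorem varpi_skewShift (hh : HasDerivAt h h' s) (hψ : HasDerivAt ψ ψ' s) (hz : z ≠ 0)
    (v : ℝ × ℝ × ℂ) :
    varpi (skewShift a h ψ (p, s, z)) (fderiv ℝ (skewShift a h ψ) (p, s, z) v) =
      varpi (p, s, z) v + (h s + ψ') * v.2.1 := by
  have hrot : (z * (v.2.1 * (exp (ψ s * I) * (ψ' * I))) + exp (ψ s * I) * v.2.2) /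
      (I * (z * exp (ψ s * I))) = (ψ' * v.2.1 : ℝ) + v.2.2 / (I * z) := by
    push_cast
    field_simp
  rw [fderiv_skewShift_apply hh hψ, varpi, varpi]
  simp only [skewShift]
  rw [hrot, add_re, ofReal_re]
  ring

end SkewShift

def Gp.wave (g : Gp) (s : ℝ) : ℂ :=
  (starRingEnd ℂ) g.b * exp (I * (s + g.a))

theorem Gp.wave_mul (g₁ g₂ : Gp) (s : ℝ) :
    (g₁.mul g₂).wave s = g₁.wave (s + g₂.a) + g₂.wave s := by
  have hconj : (starRingEnd ℂ) (exp (I * g₁.a)) = exp (-(I * g₁.a)) := by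
    rw [← exp_conj, map_mul, conj_I, conj_ofReal, neg_mul]
  have hphase :
      exp (-(I * g₁.a)) * exp (I * (s + (g₁.a + g₂.a : ℝ))) = exp (I * (s + g₂.a)) := by
    rw [← exp_add]
    push_cast
    ring_nf
  simp only [Gp.wave, Gp.mul, map_add, map_mul, hconj]
  push_cast at hphase ⊢
  linear_combination (norm := ring_nf) (starRingEnd ℂ) g₂.b * hphase

theorem Gp.hasDerivAt_wave (g : Gp) (s : ℝ) : HasDerivAt g.wave (I * g.wave s) s := by
  have h := (((hasDerivAt_id s).ofReal_comp.add_const (g.a : ℂ)).const_mul I).cexp.const_mul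
    ((starRingEnd ℂ) g.b)
  exact h.congr_deriv (by simp only [Gp.wave, id, ofReal_one, mul_one]; ring)

theorem Gp.hasDerivAt_phase (g : Gp) (s : ℝ) :
    HasDerivAt (fun s => (g.wave s).re - s * g.e - g.f) (-(g.e + (g.wave s).im)) s := by
  have hre := reCLM.hasFDerivAt.comp_hasDerivAt s (g.hasDerivAt_wave s)
  refine ((hre.sub ((hasDerivAt_id s).mul_const g.e)).sub_const g.f).congr_deriv ?_
  simp only [reCLM_apply, mul_re, I_re, I_im, one_mul]
  ring

theorem re_conj_I_mul_mul (b w : ℂ) :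
    ((starRingEnd ℂ) (I * b) * w).re = ((starRingEnd ℂ) b * w).im := by
  simp only [map_mul, conj_I, mul_re, mul_im, neg_re, neg_im, I_re, I_im, conj_re, conj_im]
  ring

theorem Gact_eq_skewShift (g : Gp) :
    Gact g = skewShift g.a (fun s => g.e + (g.wave s).im)
      (fun s => (g.wave s).re - s * g.e - g.f) := by
  ext x
  · simp only [Gact, skewShift, Gp.wave, re_conj_I_mul_mul, add_assoc]
  · rfl
  · simp [Gact, skewShift, Gp.wave, mul_comm]

theorem Gact_one (x : ℝ × ℝ × ℂ) : Gact Gp.one x = x := by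
  simp [Gact, Gp.one]

theorem Gact_mul (g₁ g₂ : Gp) (x : ℝ × ℝ × ℂ) :
    Gact (g₁.mul g₂) x = Gact g₁ (Gact g₂ x) := by
  simp only [Gact_eq_skewShift, skewShift, Gp.wave_mul]
  refine Prod.ext ?_ (Prod.ext ?_ ?_)
  · simp only [Gp.mul, add_im]
    ring
  · simp only [Gp.mul]
    ring
  · rw [mul_assoc, ← exp_add]
    simp only [Gp.mul, add_re]
    push_cast
    ring_nf

/-- The formula `Gact` defines an action of `G'` on
`X̃' = ℝ² × 𝕋` (it maps `X̃'` to itself, `1` acts as the identity, and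
`Gact (g₁ g₂) = Gact g₁ ∘ Gact g₂`), and this action preserves the contact
`1`-form `ϖ = p·ds + dz/(iz)`: for every `x ∈ X̃'` and every vector `v`
tangent to `X̃'` at `x` (i.e. `Re(z̄·vz) = 0`), the pullback of `ϖ` by
`Gact g` equals `ϖ`. -/
theorem Gact_is_action_and_preserves_varpi :
    (∀ g : Gp, Set.MapsTo (Gact g) Xtilde Xtilde) ∧
    (∀ x : ℝ × ℝ × ℂ, Gact Gp.one x = x) ∧
    (∀ (g₁ g₂ : Gp) (x : ℝ × ℝ × ℂ), Gact (Gp.mul g₁ g₂) x = Gact g₁ (Gact g₂ x)) ∧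
    (∀ (g : Gp) (x : ℝ × ℝ × ℂ), x ∈ Xtilde →
      ∀ v : ℝ × ℝ × ℂ, ((starRingEnd ℂ) x.2.2 * v.2.2).re = 0 →
        varpi (Gact g x) (fderiv ℝ (Gact g) x v) = varpi x v) := by
  refine ⟨fun g => Gact_eq_skewShift g ▸ skewShift_mapsTo_Xtilde _ _ _, Gact_one,
    Gact_mul, ?_⟩
  rintro g ⟨p, s, z⟩ hx v -
  have hshift : HasDerivAt (fun s => g.e + (g.wave s).im) (I * g.wave s).im s :=
    (imCLM.hasFDerivAt.comp_hasDerivAt s (g.hasDerivAt_wave s)).const_add g.e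
  rw [Gact_eq_skewShift,
    varpi_skewShift hshift (g.hasDerivAt_phase s) (ne_zero_of_mem_Xtilde hx)]
  ring
end
end
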